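/- arXiv:0904.3183 — 2 statements merged into one kernel-verified Lean document; each statement's English description precedes it below -/
import Mathlib

section
/- Let M be a diamond with atoms A and f : M^n → ℝ submodular with f(0) = 0. Then min_{x ∈ M^n} f(x) = max { S(z) : z ∈ P_M(f), z ≤ 0 }, where S(z) = Σ_{i=1}^n ( min_{a ∈ A} z(i, a) + max_{a ∈ A} z(i, a) ). -/
set_option linter.unreachableTactic false
set_option linter.unusedTactic false
set_option linter.unusedVariables false

inductive Dia (A : Type) : Type where
  | bot : Dia A
  | atom : A → Dia A
  | top : Dia A
  deriving DecidableEq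

namespace Dia

variable {A : Type} [DecidableEq A]

instance : Lattice (Dia A) where
  le x y := x = bot ∨ y = top ∨ x = y
  le_refl x := Or.inr (Or.inr rfl)
  le_trans x y z hxy hyz := by
    rcases hxy with h | h | h <;> rcases hyz with h' | h' | h' <;> simp_all
  le_antisymm x y hxy hyx := by
    rcases hxy with h | h | h <;> rcases hyx with h' | h' | h' <;> simp_all
  sup x y := if x = bot then y else if y = bot then x else if x = y then x else top
  inf x y := if x = top then y else if y = top then x else if x = y then x else bot
  le_sup_left x y := by
    try dsimp only
    split_ifs <;> (try simp_all) <;> (try split_ifs) <;> (try simp_all)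
  le_sup_right x y := by
    try dsimp only
    split_ifs <;> (try simp_all) <;> (try split_ifs) <;> (try simp_all)
  sup_le x y z hxz hyz := by
    try dsimp only
    rcases hxz with h | h | h <;> rcases hyz with h' | h' | h' <;> split_ifs <;> (try simp_all) <;> (try split_ifs) <;> (try simp_all)
  inf_le_left x y := by
    try dsimp only
    split_ifs <;> (try simp_all) <;> (try split_ifs) <;> (try simp_all)
  inf_le_right x y := by
    try dsimp only
    split_ifs <;> (try simp_all) <;> (try split_ifs) <;> (try simp_all)
  le_inf x y z hxy hxz := by
    try dsimp only
    rcases hxy with h | h | h <;> rcases hxz with h' | h' | h' <;> split_ifs <;> (try simp_all) <;> (try split_ifs) <;> (try simp_all)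

instance : BoundedOrder (Dia A) where
  top := top
  bot := bot
  le_top x := Or.inr (Or.inl rfl)
  bot_le x := Or.inl rfl

def drank : Dia A → ℕ
  | bot => 0
  | atom _ => 1
  | top => 2

noncomputable def gval (v : A → ℝ) : Dia A → ℝ
  | bot => 0
  | atom a => v a
  | top => sSup {r : ℝ | ∃ a a' : A, a ≠ a' ∧ r = v a + v a'}

end Dia

variable {A : Type} [DecidableEq A] {n : ℕ}

noncomputable def evalD (x : Fin n → A → ℝ) (y : Fin n → Dia A) : ℝ :=
  ∑ i, Dia.gval (x i) (y i)

def Submod (f : (Fin n → Dia A) → ℝ) : Prop :=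
  ∀ a b, f (a ⊓ b) + f (a ⊔ b) ≤ f a + f b

def InP (f : (Fin n → Dia A) → ℝ) (x : Fin n → A → ℝ) : Prop :=
  ∀ y, evalD x y ≤ f y

def UnifiedRow (v : A → ℝ) : Prop :=
  ∃ p : A, (∀ a b : A, a ≠ p → b ≠ p → v a = v b) ∧ ∀ a, v a ≤ v p

def Unified (x : Fin n → A → ℝ) : Prop := ∀ i, UnifiedRow (x i)

/-! Weak duality: for `z ≤ 0` every row satisfies `min + max ≤ gval (z i) d` for all `d`, so the
value of any nonpositive `z ∈ P_M(f)` is at most `min f`. The converse is by induction on `n`.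
Split off the last coordinate and put `B d = f (0, d)`, `g d = min_y f (y, d)`; submodularity of `f`
gives `B (d ⊓ d') + g (d ⊔ d') ≤ B d + g d'`. From these inequalities one builds a row `v ≤ 0`
taking a value `t` at one atom and `s ≤ t` at the others, with `gval v ≤ B` and
`g - gval v ≥ min f - (s + t)`. The contraction `y ↦ min_d (f (y, d) - gval v d)` is again
submodular, since `gval v` is supermodular on the diamond, and it vanishes at `0`; it is bounded
below by `min f - (s + t)`, so a dual `z'` for it, extended by the row `v`, has value `≥ min f`. -/

lemma ciInf_inf_add_ciInf_sup_le {α β : Type*} [Lattice α] [Lattice β] [Finite β] [Nonempty β]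
    {h : α → β → ℝ}
    (hh : ∀ x x' d d', h (x ⊓ x') (d ⊓ d') + h (x ⊔ x') (d ⊔ d') ≤ h x d + h x' d')
    (x x' : α) : (⨅ d, h (x ⊓ x') d) + ⨅ d, h (x ⊔ x') d ≤ (⨅ d, h x d) + ⨅ d, h x' d := by
  obtain ⟨d, hd⟩ := exists_eq_ciInf_of_finite (f := h x)
  obtain ⟨d', hd'⟩ := exists_eq_ciInf_of_finite (f := h x')
  rw [← hd, ← hd']
  exact (add_le_add (ciInf_le (Finite.bddBelow_range _) _)
    (ciInf_le (Finite.bddBelow_range _) _)).trans (hh x x' d d')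

lemma Fin.snoc_inf_snoc {α : Type*} [Min α] (y y' : Fin n → α) (d d' : α) :
    (Fin.snoc y d ⊓ Fin.snoc y' d' : Fin (n + 1) → α) = Fin.snoc (y ⊓ y') (d ⊓ d') := by
  ext i
  refine Fin.lastCases ?_ (fun j => ?_) i <;> simp

lemma Fin.snoc_sup_snoc {α : Type*} [Max α] (y y' : Fin n → α) (d d' : α) :
    (Fin.snoc y d ⊔ Fin.snoc y' d' : Fin (n + 1) → α) = Fin.snoc (y ⊔ y') (d ⊔ d') := by
  ext i
  refine Fin.lastCases ?_ (fun j => ?_) i <;> simp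

lemma Fin.snoc_bot {α : Type*} [Bot α] : (Fin.snoc (⊥ : Fin n → α) ⊥ : Fin (n + 1) → α) = ⊥ := by
  ext i
  refine Fin.lastCases ?_ (fun j => ?_) i <;> simp

namespace Dia

instance {α : Type} : Nonempty (Dia α) := ⟨bot⟩

instance {α : Type} [Finite α] : Finite (Dia α) :=
  Finite.of_injective
    (fun d : Dia α => match d with
      | bot => (none : Option (Option α))
      | atom a => some (some a)
      | top => some none)
    (by rintro (_ | _ | _) (_ | _ | _) h <;> simp_all)

@[simp] lemma bot_eq_bot : (bot : Dia A) = ⊥ := rfl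

@[simp] lemma top_eq_top : (top : Dia A) = ⊤ := rfl

lemma atom_inf_atom {a b : A} (h : a ≠ b) : atom a ⊓ atom b = ⊥ :=
  show (if atom a = top then _ else _) = bot by simp [h]

lemma atom_sup_atom {a b : A} (h : a ≠ b) : atom a ⊔ atom b = ⊤ :=
  show (if atom a = bot then _ else _) = top by simp [h]

@[simp] lemma gval_bot (v : A → ℝ) : gval v ⊥ = 0 := rfl

@[simp] lemma gval_atom {α : Type} (v : α → ℝ) (a : α) : gval v (atom a) = v a := rfl

lemma add_le_gval_top [Finite A] (v : A → ℝ) {a b : A} (h : a ≠ b) :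
    v a + v b ≤ gval v ⊤ := by
  refine le_csSup ((Set.finite_range fun p : A × A => v p.1 + v p.2).subset ?_).bddAbove
    ⟨a, b, h, rfl⟩
  rintro _ ⟨a, b, -, rfl⟩
  exact ⟨(a, b), rfl⟩

lemma gval_top_le [Nontrivial A] {v : A → ℝ} {r : ℝ}
    (h : ∀ a b, a ≠ b → v a + v b ≤ r) : gval v ⊤ ≤ r := by
  obtain ⟨a, b, hab⟩ := exists_pair_ne A
  refine csSup_le ⟨v a + v b, a, b, hab, rfl⟩ ?_
  rintro _ ⟨a, b, hab, rfl⟩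
  exact h a b hab

lemma gval_add_gval_le [Finite A] (v : A → ℝ) (d d' : Dia A) :
    gval v d + gval v d' ≤ gval v (d ⊓ d') + gval v (d ⊔ d') := by
  rcases d with _ | a | _ <;> rcases d' with _ | b | _ <;> simp [add_comm]
  obtain rfl | hab := eq_or_ne a b
  · simp
  · simpa [atom_inf_atom hab, atom_sup_atom hab] using add_le_gval_top v hab

lemma gval_update_const_top [Finite A] [Nontrivial A] (q : A) {s t : ℝ} (hst : s ≤ t) :
    gval (Function.update (fun _ => s) q t) ⊤ = t + s := by
  obtain ⟨a, ha⟩ := exists_ne q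
  refine le_antisymm (gval_top_le fun b c hbc => ?_) ?_
  · obtain rfl | hb := eq_or_ne b q
    · simp [Function.update_of_ne hbc.symm]
    obtain rfl | hc := eq_or_ne c q
    · simp [Function.update_of_ne hbc, add_comm]
    · simp [Function.update_of_ne hb, Function.update_of_ne hc, hst]
  · simpa [Function.update_of_ne ha] using
      add_le_gval_top (Function.update (fun _ => s) q t) ha.symm

end Dia

noncomputable def minAddMax {ι : Type*} (v : ι → ℝ) : ℝ :=
  sInf (Set.range v) + sSup (Set.range v)

lemma minAddMax_le_gval [Finite A] [Nontrivial A] {v : A → ℝ} (hv : ∀ a, v a ≤ 0) (d : Dia A) :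
    minAddMax v ≤ Dia.gval v d := by
  have hinf : ∀ a, sInf (Set.range v) ≤ v a := fun a =>
    csInf_le (Set.finite_range v).bddBelow ⟨a, rfl⟩
  have hsup : sSup (Set.range v) ≤ 0 :=
    csSup_le (Set.range_nonempty v) (by rintro _ ⟨a, rfl⟩; exact hv a)
  obtain ⟨p, hp⟩ := (Set.range_nonempty v).csSup_mem (Set.finite_range v)
  obtain ⟨a, ha⟩ := exists_ne p
  unfold minAddMax
  rcases d with _ | b | _
  · change _ ≤ 0
    linarith [hinf a, hv a]
  · linarith [hinf b, Dia.gval_atom v b]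
  · change _ ≤ Dia.gval v ⊤
    linarith [hinf a, Dia.add_le_gval_top v ha.symm]

lemma sum_minAddMax_le [Finite A] [Nontrivial A] {f : (Fin n → Dia A) → ℝ}
    {z : Fin n → A → ℝ} (hz : InP f z) (hz0 : ∀ i a, z i a ≤ 0) (y : Fin n → Dia A) :
    ∑ i, minAddMax (z i) ≤ f y :=
  (Finset.sum_le_sum fun i _ => minAddMax_le_gval (hz0 i) (y i)).trans (hz y)

lemma minAddMax_update_const [Nontrivial A] (q : A) {s t : ℝ} (hst : s ≤ t) :
    minAddMax (Function.update (fun _ => s) q t) = t + s := by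
  obtain ⟨a, ha⟩ := exists_ne q
  have hrange : Set.range (Function.update (fun _ => s) q t) = {s, t} := by
    ext r
    constructor
    · rintro ⟨b, rfl⟩
      obtain rfl | hb := eq_or_ne b q <;> simp [*]
    · rintro (rfl | rfl)
      · exact ⟨a, by simp [ha]⟩
      · exact ⟨q, by simp⟩
  rw [minAddMax, hrange, csInf_pair, csSup_pair, inf_eq_left.mpr hst, sup_eq_right.mpr hst,
    add_comm]

def MixedSubmod (B g : Dia A → ℝ) : Prop :=
  ∀ d d', B (d ⊓ d') + g (d ⊔ d') ≤ B d + g d'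

namespace MixedSubmod

variable {B g : Dia A → ℝ}

lemma g_top_le_B_add_g (h : MixedSubmod B g) (hB : B ⊥ = 0) {a b : A} (hab : a ≠ b) :
    g ⊤ ≤ B (.atom a) + g (.atom b) := by
  simpa [Dia.atom_inf_atom hab, Dia.atom_sup_atom hab, hB] using h (.atom a) (.atom b)

lemma g_le_B_add_g_bot (h : MixedSubmod B g) (hB : B ⊥ = 0) (d : Dia A) : g d ≤ B d + g ⊥ := by
  simpa [hB, add_comm] using h d ⊥

lemma B_add_g_top_le (h : MixedSubmod B g) (a : A) : B (.atom a) + g ⊤ ≤ B ⊤ + g (.atom a) := by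
  simpa using h ⊤ (.atom a)

theorem exists_levels [Finite A] [Nontrivial A] (h : MixedSubmod B g) (hB : B ⊥ = 0) {W : ℝ}
    (hW : ∀ d, W ≤ g d) :
    ∃ q t s, s ≤ t ∧ t ≤ 0 ∧ t ≤ B (.atom q) ∧ t + s ≤ B ⊤ ∧ W - g (.atom q) ≤ s ∧
      W - g ⊥ ≤ t + s ∧ ∀ a ≠ q, s ≤ B (.atom a) ∧ W - g (.atom a) ≤ t := by
  obtain ⟨q, hq⟩ := Finite.exists_max fun a => g (.atom a)
  obtain ⟨a₀, ha₀⟩ := exists_ne q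
  have hgtop {a b : A} (hab : a ≠ b) := h.g_top_le_B_add_g hB hab
  have hgbot := h.g_le_B_add_g_bot hB
  have hBtop := h.B_add_g_top_le
  have hWtop := hW ⊤
  have hWbot := hW ⊥
  -- `t` is the largest value below `0`, `B (atom q)` and `B ⊤ - L`, and `s` the smallest above the
  -- lower bounds coming from `atom q` and `⊥`; the mixed inequalities give `s ≤ t`.
  set L := W - g (.atom q)
  set t := min (min 0 (B (.atom q))) (B ⊤ - L)
  set s := max L (W - g ⊥ - t)
  have le_t (r : ℝ) (h₁ : r ≤ 0) (h₂ : r ≤ B (.atom q)) (h₃ : r ≤ B ⊤ - L) : r ≤ t :=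
    le_min (le_min h₁ h₂) h₃
  have s_le (r : ℝ) (h₁ : L ≤ r) (h₂ : W - g ⊥ - t ≤ r) : s ≤ r := max_le h₁ h₂
  have htop : t ≤ B ⊤ - L := min_le_right _ _
  have hsbot : W - g ⊥ - t ≤ s := le_max_right _ _
  have hst : s ≤ t := by
    refine s_le _ (le_t _ ?_ ?_ ?_) ?_
    · linarith [hW (.atom q)]
    · linarith [hgtop ha₀.symm, hq a₀]
    · linarith [hgtop ha₀, hBtop a₀, hq a₀]
    · have : (W - g ⊥) / 2 ≤ t := le_t _ (by linarith)
        (by linarith [hgtop ha₀.symm, hgbot (.atom q), hq a₀])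
        (by linarith [hgtop ha₀, hgbot ⊤, hBtop a₀, hq a₀])
      linarith
  refine ⟨q, t, s, hst, (min_le_left _ _).trans (min_le_left _ _),
    (min_le_left _ _).trans (min_le_right _ _), ?_, le_max_left _ _, by linarith,
    fun a ha => ⟨s_le _ (by linarith [hgtop ha]) ?_, le_t _ (by linarith [hW (.atom a)])
      (by linarith [hgtop ha.symm]) (by linarith [hgtop ha, hBtop a])⟩⟩
  · linarith [s_le (B ⊤ - t) (by linarith) (by linarith [hgbot ⊤])]
  · have : W - g ⊥ - B (.atom a) ≤ t := le_t _ (by linarith [hgbot (.atom a), hW (.atom a)])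
      (by linarith [hgtop ha.symm, hgbot (.atom a)]) (by linarith [hgtop ha, hgbot ⊤])
    linarith

theorem exists_row [Finite A] [Nontrivial A] (h : MixedSubmod B g) (hB : B ⊥ = 0) {W : ℝ}
    (hW : ∀ d, W ≤ g d) :
    ∃ v : A → ℝ, (∀ a, v a ≤ 0) ∧ (∀ d, Dia.gval v d ≤ B d) ∧
      ∀ d, W - minAddMax v ≤ g d - Dia.gval v d := by
  obtain ⟨q, t, s, hst, ht₀, htq, htop, hsq, hbot, hne⟩ := h.exists_levels hB hW
  refine ⟨Function.update (fun _ => s) q t, fun a => ?_, fun d => ?_, fun d => ?_⟩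
  · rw [Function.update_apply]
    split_ifs <;> linarith
  · rcases d with _ | a | _
    · exact hB.ge
    · obtain rfl | ha := eq_or_ne a q
      · simpa using htq
      · simpa [Function.update_of_ne ha] using (hne a ha).1
    · change Dia.gval _ ⊤ ≤ B ⊤
      rwa [Dia.gval_update_const_top q hst]
  · rw [minAddMax_update_const q hst]
    rcases d with _ | a | _
    · change _ ≤ g ⊥ - 0
      linarith
    · obtain rfl | ha := eq_or_ne a q
      · simp only [Dia.gval_atom, Function.update_self]
        linarith
      · simp only [Dia.gval_atom, Function.update_of_ne ha]
        linarith [(hne a ha).2]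
    · change _ ≤ g ⊤ - Dia.gval _ ⊤
      rw [Dia.gval_update_const_top q hst]
      linarith [hW ⊤]

end MixedSubmod

lemma evalD_snoc {α : Type} (z : Fin n → α → ℝ) (v : α → ℝ) (y : Fin (n + 1) → Dia α) :
    evalD (Fin.snoc z v) y = evalD z (Fin.init y) + Dia.gval v (y (Fin.last n)) := by
  simp [evalD, Fin.sum_univ_castSucc, Fin.init]

noncomputable def sliceInf (f : (Fin (n + 1) → Dia A) → ℝ) (d : Dia A) : ℝ :=
  ⨅ y : Fin n → Dia A, f (Fin.snoc y d)

lemma Submod.mixedSubmod_sliceInf [Finite A] {f : (Fin (n + 1) → Dia A) → ℝ} (hf : Submod f) :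
    MixedSubmod (fun d => f (Fin.snoc ⊥ d)) (sliceInf f) := by
  intro d d'
  obtain ⟨y, hy⟩ := exists_eq_ciInf_of_finite (f := fun y : Fin n → Dia A => f (Fin.snoc y d'))
  calc f (Fin.snoc ⊥ (d ⊓ d')) + sliceInf f (d ⊔ d')
      ≤ f (Fin.snoc ⊥ (d ⊓ d')) + f (Fin.snoc y (d ⊔ d')) := by
        gcongr
        exact ciInf_le (Finite.bddBelow_range _) y
    _ = f (Fin.snoc ⊥ d ⊓ Fin.snoc y d') + f (Fin.snoc ⊥ d ⊔ Fin.snoc y d') := by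
        rw [Fin.snoc_inf_snoc, Fin.snoc_sup_snoc, bot_inf_eq, bot_sup_eq]
    _ ≤ f (Fin.snoc ⊥ d) + sliceInf f d' := by
        rw [sliceInf, ← hy]
        exact hf _ _

noncomputable def contract (f : (Fin (n + 1) → Dia A) → ℝ) (v : A → ℝ) (y : Fin n → Dia A) : ℝ :=
  ⨅ d, f (Fin.snoc y d) - Dia.gval v d

lemma contract_le {α : Type} [Finite α] (f : (Fin (n + 1) → Dia α) → ℝ) (v : α → ℝ)
    (y : Fin n → Dia α) (d : Dia α) : contract f v y ≤ f (Fin.snoc y d) - Dia.gval v d :=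
  ciInf_le (Finite.bddBelow_range _) d

lemma Submod.contract [Finite A] {f : (Fin (n + 1) → Dia A) → ℝ} (hf : Submod f) (v : A → ℝ) :
    Submod (contract f v) :=
  ciInf_inf_add_ciInf_sup_le (h := fun y d => f (Fin.snoc y d) - Dia.gval v d) fun y y' d d' => by
    have := hf (Fin.snoc y d) (Fin.snoc y' d')
    rw [Fin.snoc_inf_snoc, Fin.snoc_sup_snoc] at this
    linarith [Dia.gval_add_gval_le v d d']

lemma contract_bot [Finite A] {f : (Fin (n + 1) → Dia A) → ℝ} {v : A → ℝ} (h0 : f ⊥ = 0)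
    (hv : ∀ d, Dia.gval v d ≤ f (Fin.snoc ⊥ d)) : contract f v ⊥ = 0 :=
  le_antisymm (by simpa [Fin.snoc_bot, h0] using contract_le f v ⊥ ⊥)
    (le_ciInf fun d => sub_nonneg.mpr (hv d))

lemma InP.snoc_of_contract {α : Type} [Finite α] {f : (Fin (n + 1) → Dia α) → ℝ} {v : α → ℝ}
    {z : Fin n → α → ℝ} (hz : InP (contract f v) z) : InP f (Fin.snoc z v) := by
  intro y
  have := contract_le f v (Fin.init y) (y (Fin.last n))
  rw [Fin.snoc_init_self] at this
  linarith [evalD_snoc z v y, hz (Fin.init y)]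

theorem exists_nonpos_inP_le_sum_minAddMax [Finite A] [Nontrivial A]
    (f : (Fin n → Dia A) → ℝ) (hf : Submod f) (h0 : f ⊥ = 0) (m : ℝ) (hm : ∀ y, m ≤ f y) :
    ∃ z, InP f z ∧ (∀ i a, z i a ≤ 0) ∧ m ≤ ∑ i, minAddMax (z i) := by
  induction n generalizing m with
  | zero =>
    refine ⟨Fin.elim0, fun y => ?_, fun i => i.elim0, by simpa [h0] using hm ⊥⟩
    simp [evalD, Subsingleton.elim y ⊥, h0]
  | succ n ih =>
    obtain ⟨v, hv0, hvB, hvg⟩ := hf.mixedSubmod_sliceInf.exists_row (W := m)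
      (by simpa [Fin.snoc_bot] using h0) fun d => le_ciInf fun y => hm _
    obtain ⟨z, hz, hz0, hzm⟩ := ih (contract f v) (hf.contract v) (contract_bot h0 hvB)
      (m - minAddMax v) fun y => le_ciInf fun d =>
        (hvg d).trans (sub_le_sub_right (ciInf_le (Finite.bddBelow_range _) y) _)
    refine ⟨Fin.snoc z v, hz.snoc_of_contract, fun i a => ?_, ?_⟩
    · refine Fin.lastCases ?_ (fun j => ?_) i <;> simp [hv0, hz0]
    · simp only [Fin.sum_univ_castSucc, Fin.snoc_castSucc, Fin.snoc_last]
      linarith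

/-- min f = max { S(z) : z ∈ P_M(f), z ≤ 0 } where
S(z) = Σ_i (min_a z(i,a) + max_a z(i,a)). -/
theorem stmt8 [Fintype A] (hA : 3 ≤ Fintype.card A)
    (f : (Fin n → Dia A) → ℝ) (hf : Submod f)
    (h0 : f (fun _ => Dia.bot) = 0) :
    ∃ m : ℝ, IsLeast (Set.range f) m ∧
      IsGreatest {r : ℝ | ∃ z : Fin n → A → ℝ, InP f z ∧ (∀ i a, z i a ≤ 0) ∧
        r = ∑ i, (sInf (Set.range (z i)) + sSup (Set.range (z i)))} m := by
  have : Nontrivial A := Fintype.one_lt_card_iff_nontrivial.mp (by omega)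
  obtain ⟨y₀, hy₀⟩ := Finite.exists_min f
  obtain ⟨z, hz, hz0, hzm⟩ := exists_nonpos_inP_le_sum_minAddMax f hf h0 (f y₀) hy₀
  refine ⟨f y₀, ⟨⟨y₀, rfl⟩, ?_⟩, ⟨z, hz, hz0, le_antisymm hzm (sum_minAddMax_le hz hz0 y₀)⟩, ?_⟩
  · rintro _ ⟨y, rfl⟩
    exact hy₀ y
  · rintro _ ⟨z', hz', hz'0, rfl⟩
    exact sum_minAddMax_le hz' hz'0 y₀
end

section
/- Let M be a diamond, f : M^n → ℝ strictly submodular, and x a vertex of P_M(f). Then the set of x-tight tuples forms a chain in M^n (any two x-tight tuples are comparable). -/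
set_option linter.unreachableTactic false
set_option linter.unusedTactic false
set_option linter.unusedVariables false

variable {A : Type} [DecidableEq A] {n : ℕ}

/-! For tight `t`, `u` and `x ∈ P_M(f)`, supermodularity of `y ↦ x(y)` gives
`f t + f u = x(t) + x(u) ≤ x(t ⊓ u) + x(t ⊔ u) ≤ f (t ⊓ u) + f (t ⊔ u)`,
which strict submodularity rules out when `t` and `u` are incomparable. -/

namespace Dia

variable {A : Type}

/-- Finiteness keeps the `sSup` in `gval v top` from being the junk value of an unbounded set. -/
theorem add_le_gval_top_s13 [Finite A] (v : A → ℝ) {p q : A} (hpq : p ≠ q) :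
    v p + v q ≤ gval v top := by
  have hbdd : BddAbove {r : ℝ | ∃ a a' : A, a ≠ a' ∧ r = v a + v a'} := by
    refine ((Set.finite_range fun a : A × A => v a.1 + v a.2).subset ?_).bddAbove
    rintro r ⟨a, a', -, rfl⟩
    exact ⟨(a, a'), rfl⟩
  exact le_csSup hbdd ⟨p, q, hpq, rfl⟩

variable [DecidableEq A]

theorem le_iff {a b : Dia A} : a ≤ b ↔ a = bot ∨ b = top ∨ a = b := Iff.rfl

theorem exists_atoms_of_not_le {a b : Dia A} (hab : ¬ a ≤ b) (hba : ¬ b ≤ a) :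
    ∃ p q : A, p ≠ q ∧ a = atom p ∧ b = atom q := by
  simp only [le_iff, not_or] at hab hba
  cases a <;> cases b <;> simp_all

theorem atom_inf_atom_s13 {p q : A} (hpq : p ≠ q) : (atom p : Dia A) ⊓ atom q = bot := by
  change (if _ then _ else _) = _
  simp [hpq]

theorem atom_sup_atom_s13 {p q : A} (hpq : p ≠ q) : (atom p : Dia A) ⊔ atom q = top := by
  change (if _ then _ else _) = _
  simp [hpq]

theorem gval_add_le_gval_inf_add_gval_sup [Finite A] (v : A → ℝ) (a b : Dia A) :
    gval v a + gval v b ≤ gval v (a ⊓ b) + gval v (a ⊔ b) := by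
  by_cases hab : a ≤ b
  · rw [inf_eq_left.2 hab, sup_eq_right.2 hab]
  by_cases hba : b ≤ a
  · rw [inf_eq_right.2 hba, sup_eq_left.2 hba, add_comm]
  obtain ⟨p, q, hpq, rfl, rfl⟩ := exists_atoms_of_not_le hab hba
  rw [atom_inf_atom_s13 hpq, atom_sup_atom_s13 hpq]
  simpa [gval] using add_le_gval_top_s13 v hpq

end Dia

theorem evalD_add_le_evalD_inf_add_evalD_sup [Finite A] (x : Fin n → A → ℝ)
    (t u : Fin n → Dia A) :
    evalD x t + evalD x u ≤ evalD x (t ⊓ u) + evalD x (t ⊔ u) := by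
  simp only [evalD, ← Finset.sum_add_distrib]
  exact Finset.sum_le_sum fun i _ => Dia.gval_add_le_gval_inf_add_gval_sup (x i) (t i) (u i)

theorem add_le_inf_add_sup_of_tight [Finite A] {f : (Fin n → Dia A) → ℝ}
    {x : Fin n → A → ℝ} (hx : InP f x) {t u : Fin n → Dia A}
    (ht : evalD x t = f t) (hu : evalD x u = f u) :
    f t + f u ≤ f (t ⊓ u) + f (t ⊔ u) := by
  calc f t + f u = evalD x t + evalD x u := by rw [ht, hu]
    _ ≤ evalD x (t ⊓ u) + evalD x (t ⊔ u) := evalD_add_le_evalD_inf_add_evalD_sup x t u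
    _ ≤ f (t ⊓ u) + f (t ⊔ u) := add_le_add (hx _) (hx _)

theorem stmt13_general [Fintype A]
    (f : (Fin n → Dia A) → ℝ)
    (hstrict : ∀ t u : Fin n → Dia A, ¬ t ≤ u → ¬ u ≤ t →
      f (t ⊓ u) + f (t ⊔ u) < f t + f u)
    (x : Fin n → A → ℝ) (hx : InP f x)
    (t u : Fin n → Dia A) (ht : evalD x t = f t) (hu : evalD x u = f u) :
    t ≤ u ∨ u ≤ t := by
  by_contra! h
  exact (hstrict t u h.1 h.2).not_ge (add_le_inf_add_sup_of_tight hx ht hu)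

/-- for strictly submodular f, the x-tight tuples of a vertex x of
P_M(f) form a chain. -/
theorem stmt13 [Fintype A] (hA : 3 ≤ Fintype.card A)
    (f : (Fin n → Dia A) → ℝ)
    (hstrict : ∀ t u : Fin n → Dia A, ¬ t ≤ u → ¬ u ≤ t →
      f (t ⊓ u) + f (t ⊔ u) < f t + f u)
    (x : Fin n → A → ℝ) (hx : InP f x)
    (hvertex : ∃ c : Fin n → A → ℝ, ∀ y : Fin n → A → ℝ, InP f y → y ≠ x →
      (∑ i, ∑ a, c i a * y i a) < ∑ i, ∑ a, c i a * x i a)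
    (t u : Fin n → Dia A) (ht : evalD x t = f t) (hu : evalD x u = f u) :
    t ≤ u ∨ u ≤ t :=
  stmt13_general f hstrict x hx t u ht hu
end
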